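/- arXiv:1405.4552 — 11 statements merged into one kernel-verified Lean document; each statement's English description precedes it below -/
import Mathlib

section
/- Let R be a ring, S a left denominator set, and σ : R → S⁻¹R the localization map. If G is the group of units of S⁻¹R, then S' := σ⁻¹(G) is a left denominator set of R with ass(S') = ass(S). -/
/-- `S` is a left Ore set of the ring `R`: a multiplicative subset
(`1 ∈ S`, `0 ∉ S`) satisfying the left Ore condition. -/
def LeftOreSet {R : Type*} [Ring R] (S : Set R) : Prop :=
  1 ∈ S ∧ 0 ∉ S ∧ (∀ s ∈ S, ∀ t ∈ S, s * t ∈ S) ∧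
  (∀ r : R, ∀ s ∈ S, ∃ s' ∈ S, ∃ r' : R, s' * r = r' * s)

/-- `ass S = {r ∈ R | s r = 0 for some s ∈ S}`. -/
def assSet {R : Type*} [Ring R] (S : Set R) : Set R := {r : R | ∃ s ∈ S, s * r = 0}

/-- `S` is a left denominator set: a left Ore set such that `r s = 0`
(with `s ∈ S`) implies `t r = 0` for some `t ∈ S`. -/
def LeftDenominatorSet {R : Type*} [Ring R] (S : Set R) : Prop :=
  LeftOreSet S ∧ ∀ r : R, ∀ s ∈ S, r * s = 0 → ∃ t ∈ S, t * r = 0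

/-- A maximal element of the poset of left denominator sets of `R`. -/
def MaxLeftDenominatorSet {R : Type*} [Ring R] (S : Set R) : Prop :=
  LeftDenominatorSet S ∧ ∀ T : Set R, LeftDenominatorSet T → S ⊆ T → T = S

/-- `σ : R → Q` presents `Q` as the left Ore localization `S⁻¹R`:
elements of `S` become units, every element of `Q` is a left fraction
`σ(s)⁻¹ σ(r)`, and the kernel of `σ` is `ass S`. -/
def IsLeftLocalization {R : Type*} [Ring R] (S : Set R) {Q : Type*} [Ring Q]
    (σ : R →+* Q) : Prop :=
  (∀ s ∈ S, IsUnit (σ s)) ∧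
  (∀ q : Q, ∃ s ∈ S, ∃ r : R, σ s * q = σ r) ∧
  (∀ r : R, σ r = 0 ↔ r ∈ assSet S)

/-- The core of a left Ore set `S`: elements `s ∈ S` with `ker (s ·) = ass S`. -/
def coreSet {R : Type*} [Ring R] (S : Set R) : Set R :=
  {s ∈ S | {r : R | s * r = 0} = assSet S}

/-- If `S` is a left denominator set and `σ : R → S⁻¹R` the localization map,
then `S' := σ⁻¹((S⁻¹R)^*)` is a left denominator set with `ass S' = ass S`. -/
theorem preimage_units_leftDenominatorSet {R : Type*} [Ring R] (S : Set R)
    (hS : LeftDenominatorSet S) {Q : Type*} [Ring Q] (σ : R →+* Q)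
    (hloc : IsLeftLocalization S σ) :
    LeftDenominatorSet {r : R | IsUnit (σ r)} ∧
      assSet {r : R | IsUnit (σ r)} = assSet S := by
  obtain ⟨⟨h1S, h0S, hmul, _hore⟩, _hden⟩ := hS
  obtain ⟨hunit, hfrac, hker⟩ := hloc
  have hSsub : S ⊆ {r : R | IsUnit (σ r)} := fun s hs => hunit s hs
  have cancL : ∀ {a : R} {b : Q}, IsUnit (σ a) → σ a * b = 0 → b = 0 := by
    intro a b h hb
    obtain ⟨u, hu⟩ := h
    have : (↑u⁻¹ : Q) * (σ a * b) = b := by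
      rw [← hu, ← mul_assoc, Units.inv_mul, one_mul]
    rw [hb, mul_zero] at this
    exact this.symm
  have cancR : ∀ {a : R} {b : Q}, IsUnit (σ a) → b * σ a = 0 → b = 0 := by
    intro a b h hb
    obtain ⟨u, hu⟩ := h
    have : b * σ a * (↑u⁻¹ : Q) = b := by
      rw [← hu, mul_assoc, Units.mul_inv, mul_one]
    rw [hb, zero_mul] at this
    exact this.symm
  refine ⟨⟨⟨?_, ?_, ?_, ?_⟩, ?_⟩, ?_⟩
  · show IsUnit (σ 1)
    rw [map_one]; exact isUnit_one
  · intro h0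
    have h : IsUnit (0 : Q) := by rwa [Set.mem_setOf_eq, map_zero] at h0
    have h01 : (0 : Q) = 1 := isUnit_zero_iff.mp h
    have : σ 1 = 0 := by rw [map_one, ← h01]
    obtain ⟨t, htS, ht⟩ := (hker 1).mp this
    rw [mul_one] at ht
    exact h0S (ht ▸ htS)
  · intro s hs t ht
    show IsUnit (σ (s * t))
    rw [map_mul]; exact hs.mul ht
  · intro r s hs
    obtain ⟨u, hu⟩ := hs
    obtain ⟨a, haS, b, hab⟩ := hfrac (σ r * (↑u⁻¹ : Q))
    have hab' : σ a * σ r = σ b * σ s := by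
      have := congrArg (· * (↑u : Q)) hab
      simp only [mul_assoc, Units.inv_mul, mul_one] at this
      rw [this, hu]
    have hker' : σ (a * r - b * s) = 0 := by
      rw [map_sub, map_mul, map_mul, hab', sub_self]
    obtain ⟨t, htS, ht⟩ := (hker _).mp hker'
    refine ⟨t * a, hSsub (hmul t htS a haS), t * b, ?_⟩
    rw [mul_sub, sub_eq_zero, ← mul_assoc, ← mul_assoc] at ht
    exact ht
  · intro r s hs hrs
    have : σ r * σ s = 0 := by rw [← map_mul, hrs, map_zero]
    obtain ⟨t, htS, ht⟩ := (hker r).mp (cancR hs this)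
    exact ⟨t, hSsub htS, ht⟩
  · ext r
    constructor
    · rintro ⟨s, hs, h⟩
      have : σ s * σ r = 0 := by rw [← map_mul, h, map_zero]
      exact (hker r).mp (cancL hs this)
    · rintro ⟨s, hsS, h⟩
      exact ⟨s, hSsub hsS, h⟩
end

section
/- Let R be a ring, S a maximal left denominator set of R, and T a left denominator set of R. Then T ⊆ S if and only if ass(T) ⊆ ass(S). -/
section AuxGen

variable {R : Type*} [Ring R] (S T : Set R)

/-- The multiplicative semigroup generated by `S ∪ T`: nonempty products of generators. -/
def genSet : Set R :=
  {r : R | ∃ l : List R, l ≠ [] ∧ (∀ g ∈ l, g ∈ S ∪ T) ∧ l.prod = r}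

lemma mem_genSet_of_mem {g : R} (hg : g ∈ S ∪ T) : g ∈ genSet S T :=
  ⟨[g], by simp, by simpa using hg, by simp⟩

lemma genSet_mul {a b : R} (ha : a ∈ genSet S T) (hb : b ∈ genSet S T) :
    a * b ∈ genSet S T := by
  obtain ⟨l, hl, hlm, rfl⟩ := ha
  obtain ⟨m, hm, hmm, rfl⟩ := hb
  refine ⟨l ++ m, by simp [hl], ?_, by simp⟩
  intro g hg
  rcases List.mem_append.mp hg with h | h
  · exact hlm g h
  · exact hmm g h

variable {S T}

/-- If a generator kills `p` on the left, some element of `S` kills `p`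
(using `ass T ⊆ ass S`). -/
lemma leftmost (hass : assSet T ⊆ assSet S) {g p : R} (hg : g ∈ S ∪ T)
    (h : g * p = 0) : ∃ s ∈ S, s * p = 0 := by
  rcases hg with hg | hg
  · exact ⟨g, hg, h⟩
  · exact hass ⟨g, hg, h⟩

/-- Right-denominator property for generators. -/
lemma rightmost (hS : LeftDenominatorSet S) (hT : LeftDenominatorSet T) {g q : R} (hg : g ∈ S ∪ T) (h : q * g = 0) :
    ∃ h ∈ S ∪ T, h * q = 0 := by
  rcases hg with hg | hg
  · obtain ⟨t, ht, h0⟩ := hS.2 q g hg h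
    exact ⟨t, Or.inl ht, h0⟩
  · obtain ⟨t, ht, h0⟩ := hT.2 q g hg h
    exact ⟨t, Or.inr ht, h0⟩

/-- No nonempty word in generators has product zero. -/
lemma prod_ne_zero (hS : LeftDenominatorSet S) (hT : LeftDenominatorSet T) (hass : assSet T ⊆ assSet S) :
    ∀ n (l : List R), l.length = n → l ≠ [] → (∀ g ∈ l, g ∈ S ∪ T) → l.prod ≠ 0 := by
  intro n
  induction n with
  | zero => intro l hlen hne _; exact absurd (List.length_eq_zero_iff.mp hlen) hne
  | succ n IH =>
    rintro l hlen hne hmem hzero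
    obtain ⟨g, rest, rfl⟩ := List.exists_cons_of_ne_nil hne
    have hg : g ∈ S ∪ T := hmem g (by simp)
    have hrestmem : ∀ x ∈ rest, x ∈ S ∪ T := fun x hx => hmem x (by simp [hx])
    have hprod : g * rest.prod = 0 := by simpa using hzero
    rcases eq_or_ne rest [] with rfl | hrne
    · -- singleton: g = 0 contradicts 0 ∉ S ∪ T
      simp at hprod
      rcases hg with hg | hg
      · exact hS.1.2.1 (hprod ▸ hg)
      · exact hT.1.2.1 (hprod ▸ hg)
    · -- step
      obtain ⟨s, hs, hs0⟩ := leftmost hass hg hprod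
      obtain ⟨init, last, rfl⟩ := List.eq_nil_or_concat rest |>.resolve_left hrne
      have hlast : last ∈ S ∪ T := hrestmem last (by simp)
      have hinitmem : ∀ x ∈ init, x ∈ S ∪ T := fun x hx => hrestmem x (by simp [hx])
      have hq : (s * init.prod) * last = 0 := by
        have h1 : (init.concat last).prod = init.prod * last := by
          simp [List.concat_eq_append]
        rw [h1] at hs0
        rw [mul_assoc]
        exact hs0
      obtain ⟨h, hh, hh0⟩ := rightmost hS hT hlast hq
      obtain ⟨s₂, hs₂, hs₂0⟩ := leftmost hass hh hh0
      have hnewmem : ∀ x ∈ (s₂ * s) :: init, x ∈ S ∪ T := by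
        intro x hx
        rcases List.mem_cons.mp hx with rfl | hx
        · exact Or.inl (hS.1.2.2.1 s₂ hs₂ s hs)
        · exact hinitmem x hx
      have hnewlen : ((s₂ * s) :: init).length = n := by
        simp [List.concat_eq_append] at hlen
        simp [hlen]
      refine IH ((s₂ * s) :: init) hnewlen (by simp) hnewmem ?_
      have : (s₂ * s) * init.prod = 0 := by
        rw [mul_assoc]; exact hs₂0
      simpa using this

/-- Left Ore condition for products of generators. -/
lemma ore_aux (hS : LeftDenominatorSet S) (hT : LeftDenominatorSet T) : ∀ (l : List R), (∀ g ∈ l, g ∈ S ∪ T) →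
    ∀ r : R, ∃ u' ∈ genSet S T, ∃ r' : R, u' * r = r' * l.prod := by
  intro l
  induction l with
  | nil =>
    intro _ r
    exact ⟨1, mem_genSet_of_mem S T (Or.inl hS.1.1), r, by simp⟩
  | cons g rest IH =>
    intro hmem r
    obtain ⟨u₁, hu₁, r₁, hr₁⟩ := IH (fun x hx => hmem x (by simp [hx])) r
    have hg : g ∈ S ∪ T := hmem g (by simp)
    have : ∃ u₂ ∈ S ∪ T, ∃ r₂ : R, u₂ * r₁ = r₂ * g := by
      rcases hg with hg | hg
      · obtain ⟨s', hs', r₂, h⟩ := hS.1.2.2.2 r₁ g hg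
        exact ⟨s', Or.inl hs', r₂, h⟩
      · obtain ⟨t', ht', r₂, h⟩ := hT.1.2.2.2 r₁ g hg
        exact ⟨t', Or.inr ht', r₂, h⟩
    obtain ⟨u₂, hu₂, r₂, hr₂⟩ := this
    refine ⟨u₂ * u₁, genSet_mul S T (mem_genSet_of_mem S T hu₂) hu₁, r₂, ?_⟩
    calc u₂ * u₁ * r = u₂ * (u₁ * r) := by rw [mul_assoc]
      _ = u₂ * (r₁ * rest.prod) := by rw [hr₁]
      _ = (u₂ * r₁) * rest.prod := by rw [mul_assoc]
      _ = (r₂ * g) * rest.prod := by rw [hr₂]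
      _ = r₂ * (g :: rest).prod := by simp [mul_assoc]

/-- Right-denominator condition for products of generators. -/
lemma den_aux (hS : LeftDenominatorSet S) (hT : LeftDenominatorSet T) : ∀ (l : List R), (∀ g ∈ l, g ∈ S ∪ T) →
    ∀ r : R, r * l.prod = 0 → ∃ v ∈ genSet S T, v * r = 0 := by
  intro l
  induction l with
  | nil =>
    intro _ r hr
    simp at hr
    exact ⟨1, mem_genSet_of_mem S T (Or.inl hS.1.1), by simp [hr]⟩
  | cons g rest IH =>
    intro hmem r hr
    have hg : g ∈ S ∪ T := hmem g (by simp)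
    have : (r * g) * rest.prod = 0 := by
      rw [mul_assoc]; simpa using hr
    obtain ⟨v₁, hv₁, hv₁0⟩ := IH (fun x hx => hmem x (by simp [hx])) (r * g) this
    have : (v₁ * r) * g = 0 := by rw [mul_assoc]; exact hv₁0
    obtain ⟨h, hh, hh0⟩ := rightmost hS hT hg this
    refine ⟨h * v₁, genSet_mul S T (mem_genSet_of_mem S T hh) hv₁, ?_⟩
    rw [mul_assoc]; exact hh0

/-- The generated semigroup is a left denominator set. -/
lemma genSet_den (hS : LeftDenominatorSet S) (hT : LeftDenominatorSet T) (hass : assSet T ⊆ assSet S) : LeftDenominatorSet (genSet S T) := by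
  constructor
  · refine ⟨mem_genSet_of_mem S T (Or.inl hS.1.1), ?_, ?_, ?_⟩
    · rintro ⟨l, hne, hmem, hzero⟩
      exact prod_ne_zero hS hT hass l.length l rfl hne hmem hzero
    · intro a ha b hb; exact genSet_mul S T ha hb
    · rintro r s ⟨l, hne, hmem, rfl⟩
      obtain ⟨u', hu', r', h⟩ := ore_aux hS hT l hmem r
      exact ⟨u', hu', r', h⟩
  · rintro r s ⟨l, hne, hmem, rfl⟩ hr
    obtain ⟨v, hv, hv0⟩ := den_aux hS hT l hmem r hr
    exact ⟨v, hv, hv0⟩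

end AuxGen

/-- For `S` a maximal left denominator set and `T` a left denominator set,
`T ⊆ S` iff `ass T ⊆ ass S`. -/
theorem subset_maxDen_iff_assSet_subset {R : Type*} [Ring R] (S T : Set R)
    (hS : MaxLeftDenominatorSet S) (hT : LeftDenominatorSet T) :
    T ⊆ S ↔ assSet T ⊆ assSet S := by
  constructor
  · rintro hsub r ⟨t, ht, h0⟩
    exact ⟨t, hsub ht, h0⟩
  · intro hass t ht
    have hden := genSet_den hS.1 hT hass
    have hSsub : S ⊆ genSet S T := fun s hs => mem_genSet_of_mem S T (Or.inl hs)
    have hUS := hS.2 (genSet S T) hden hSsub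
    rw [← hUS]
    exact mem_genSet_of_mem S T (Or.inr ht)
end

section
/- Let R be a ring, S a maximal left denominator set of R such that S = σ⁻¹((S⁻¹R)^*) where σ : R → S⁻¹R is the localization map. Then S⁻¹R is a division ring if and only if R = S ∪ ass(S). -/
/-- Let `S` be a maximal left denominator set with `S = σ⁻¹((S⁻¹R)^*)`.
Then `S⁻¹R` is a division ring iff `R = S ∪ ass S`. -/
theorem localization_divisionRing_iff {R : Type*} [Ring R] (S : Set R)
    (hS : MaxLeftDenominatorSet S) {Q : Type*} [Ring Q] (σ : R →+* Q)
    (hloc : IsLeftLocalization S σ) (hpre : S = σ ⁻¹' {q : Q | IsUnit q}) :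
    (Nontrivial Q ∧ ∀ q : Q, q ≠ 0 → IsUnit q) ↔
      (∀ r : R, r ∈ S ∨ r ∈ assSet S) := by
  obtain ⟨hunit, hfrac, hker⟩ := hloc
  obtain ⟨⟨⟨h1, h0, _, _⟩, _⟩, _⟩ := hS
  constructor
  · rintro ⟨_, hdiv⟩ r
    by_cases hr : σ r = 0
    · exact Or.inr ((hker r).mp hr)
    · exact Or.inl (hpre ▸ (Set.mem_preimage.mpr (hdiv _ hr)))
  · intro hcov
    have hnt : Nontrivial Q := by
      refine ⟨1, 0, fun h10 => ?_⟩
      have : σ 1 = 0 := by simpa using h10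
      obtain ⟨s, hs, hs0⟩ := (hker 1).mp this
      rw [mul_one] at hs0
      exact h0 (hs0 ▸ hs)
    refine ⟨hnt, fun q hq => ?_⟩
    obtain ⟨s, hs, r, hsr⟩ := hfrac q
    have hus := hunit s hs
    have hrne : σ r ≠ 0 := by
      intro h
      rw [h] at hsr
      obtain ⟨u, hu⟩ := hus
      apply hq
      have := congrArg (fun x => (↑u⁻¹ : Q) * x) hsr
      simpa [← hu, ← mul_assoc, Units.inv_mul] using this
    have hrS : r ∈ S := (hcov r).resolve_right fun h => hrne ((hker r).mpr h)
    have hur : IsUnit (σ r) := hunit r hrS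
    have : q = (hus.unit⁻¹ : Qˣ) * σ r := by
      rw [← hsr, ← mul_assoc]
      simp [IsUnit.val_inv_mul]
    rw [this]
    exact (hus.unit⁻¹.isUnit).mul hur
end

section
/- Let S be a left denominator set of a ring R with nonempty core S_c. Then S·S_c ⊆ S_c, i.e. for all s ∈ S and t ∈ S_c, st ∈ S_c. -/
/-- If `S` is a left denominator set with nonempty core, then `S · S_c ⊆ S_c`. -/
theorem mul_core_mem_core {R : Type*} [Ring R] (S : Set R)
    (hS : LeftDenominatorSet S) (hc : (coreSet S).Nonempty) :
    ∀ s ∈ S, ∀ t ∈ coreSet S, s * t ∈ coreSet S := by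
  rintro s hs t ⟨htS, hker⟩
  obtain ⟨⟨_, _, hmul, _⟩, _⟩ := hS
  refine ⟨hmul s hs t htS, Set.Subset.antisymm ?_ ?_⟩
  · intro r hr
    -- s * t * r = 0, so t * r ∈ assSet S (since s kills it), so ∃ u ∈ S, u * (t * r) = 0
    have htr : t * r ∈ assSet S := ⟨s, hs, by rw [← mul_assoc]; exact hr⟩
    obtain ⟨u, huS, hu⟩ := htr
    exact ⟨u * t, hmul u huS t htS, by rw [mul_assoc]; exact hu⟩
  · intro r hr
    have : t * r = 0 := by rw [← hker] at hr; exact hr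
    show s * t * r = 0
    rw [mul_assoc, this, mul_zero]
end

section
/- Let S be a left denominator set of a ring R with nonempty core S_c. Then for every s ∈ S there exists t ∈ S such that ts ∈ S_c. -/
/-- If `S` is a left denominator set with nonempty core, then for every `s ∈ S`
there exists `t ∈ S` with `t s ∈ S_c`. -/
theorem exists_mul_mem_core {R : Type*} [Ring R] (S : Set R)
    (hS : LeftDenominatorSet S) (hc : (coreSet S).Nonempty) :
    ∀ s ∈ S, ∃ t ∈ S, t * s ∈ coreSet S := by
  obtain ⟨c, hcS, hcker⟩ := hc
  intro s hs
  obtain ⟨⟨h1, h0, hmul, hore⟩, hden⟩ := hS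
  obtain ⟨t, htS, r', hts⟩ := hore s c hcS
  refine ⟨t, htS, hmul t htS s hs, ?_⟩
  ext x
  simp only [Set.mem_setOf_eq]
  constructor
  · intro hx
    exact ⟨t * s, hmul t htS s hs, hx⟩
  · intro hx
    have hcx : c * x = 0 := by
      have : x ∈ {r : R | c * r = 0} := hcker.symm ▸ hx
      exact this
    calc t * s * x = r' * (c * x) := by rw [hts, mul_assoc]
      _ = 0 := by rw [hcx, mul_zero]
end

section
/- Let S be a left denominator set of a ring R with nonempty core S_c. Then the natural map θ : S_c⁻¹R → S⁻¹R sending s⁻¹r to s⁻¹r is a ring isomorphism. -/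
theorem loc_hom {R : Type*} [Ring R] (T : Set R) (hne : T.Nonempty)
    (hmul : ∀ s ∈ T, ∀ t ∈ T, s * t ∈ T)
    (hore : ∀ r : R, ∀ s ∈ T, ∃ s' ∈ T, ∃ r' : R, s' * r = r' * s)
    {Q1 : Type*} [Ring Q1] (σ1 : R →+* Q1) (h1 : IsLeftLocalization T σ1)
    {Q2 : Type*} [Ring Q2] (σ2 : R →+* Q2) (h2 : IsLeftLocalization T σ2) :
    ∃ φ : Q1 →+* Q2, ∀ q : Q1, ∀ s ∈ T, ∀ r : R, σ1 s * q = σ1 r → σ2 s * φ q = σ2 r := by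
  obtain ⟨hu1, hfr1, hk1⟩ := h1
  obtain ⟨hu2, hfr2, hk2⟩ := h2
  have cancel2 : ∀ s ∈ T, ∀ x y : Q2, σ2 s * x = σ2 s * y → x = y :=
    fun s hs x y h => (hu2 s hs).mul_left_cancel h
  have key : ∀ x y : R, σ1 x = σ1 y → σ2 x = σ2 y := by
    intro x y h
    have h0 : σ1 (x - y) = 0 := by rw [map_sub, h, sub_self]
    have h2' : σ2 (x - y) = 0 := (hk2 _).2 ((hk1 _).1 h0)
    rw [map_sub, sub_eq_zero] at h2'
    exact h2'
  have wd : ∀ (q : Q1) (s : R), s ∈ T → ∀ r : R, σ1 s * q = σ1 r →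
      ∀ s' : R, s' ∈ T → ∀ r' : R, σ1 s' * q = σ1 r' →
      ∀ x : Q2, σ2 s * x = σ2 r → σ2 s' * x = σ2 r' := by
    intro q s hs r hr s' hs' r' hr' x hx
    obtain ⟨u, hu, a, hua⟩ := hore s' s hs
    have e1 : σ1 (u * r') = σ1 (a * r) := by
      have h' : σ1 (u * s') * q = σ1 (a * s) * q := by rw [hua]
      rw [map_mul, map_mul, mul_assoc, mul_assoc, hr, hr'] at h'
      rw [map_mul, map_mul]; exact h'
    have e2 : σ2 (u * r') = σ2 (a * r) := key _ _ e1
    apply cancel2 u hu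
    calc σ2 u * (σ2 s' * x) = σ2 (u * s') * x := by rw [map_mul, mul_assoc]
      _ = σ2 (a * s) * x := by rw [hua]
      _ = σ2 a * (σ2 s * x) := by rw [map_mul, mul_assoc]
      _ = σ2 a * σ2 r := by rw [hx]
      _ = σ2 (a * r) := by rw [map_mul]
      _ = σ2 (u * r') := e2.symm
      _ = σ2 u * σ2 r' := by rw [map_mul]
  choose sf hsf rf hrep using hfr1
  set f : Q1 → Q2 := fun q => ↑(hu2 (sf q) (hsf q)).unit⁻¹ * σ2 (rf q) with hf
  have spec0 : ∀ q : Q1, σ2 (sf q) * f q = σ2 (rf q) := by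
    intro q
    have h := Units.mul_inv_cancel_left (hu2 (sf q) (hsf q)).unit (σ2 (rf q))
    rw [(hu2 (sf q) (hsf q)).unit_spec] at h
    exact h
  have spec : ∀ q : Q1, ∀ s ∈ T, ∀ r : R, σ1 s * q = σ1 r → σ2 s * f q = σ2 r :=
    fun q s hs r h => wd q (sf q) (hsf q) (rf q) (hrep q) s hs r h (f q) (spec0 q)
  obtain ⟨c, hcT⟩ := hne
  have hone : f 1 = 1 := by
    have h := spec 1 c hcT c (by rw [mul_one])
    exact cancel2 c hcT _ _ (by rw [h, mul_one])
  have hzero : f 0 = 0 := by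
    have h := spec 0 c hcT 0 (by rw [mul_zero, map_zero])
    rw [map_zero] at h
    exact cancel2 c hcT _ _ (by rw [h, mul_zero])
  have hadd : ∀ q q' : Q1, f (q + q') = f q + f q' := by
    intro q q'
    obtain ⟨u, hu, a, hua⟩ := hore (sf q) (sf q') (hsf q')
    have hd : u * sf q ∈ T := hmul u hu _ (hsf q)
    have rep : σ1 (u * sf q) * (q + q') = σ1 (u * rf q + a * rf q') := by
      rw [mul_add, map_add]
      congr 1
      · rw [map_mul, map_mul, mul_assoc, hrep q]
      · rw [hua, map_mul, map_mul, mul_assoc, hrep q']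
    have h1' := spec (q + q') _ hd _ rep
    apply cancel2 _ hd
    rw [h1']
    have e1 : σ2 (u * rf q) = σ2 (u * sf q) * f q := by
      rw [map_mul, map_mul, mul_assoc, spec0]
    have e2 : σ2 (a * rf q') = σ2 (a * sf q') * f q' := by
      rw [map_mul, map_mul, mul_assoc, spec0]
    rw [map_add, e1, e2, ← hua, mul_add]
  have hmulf : ∀ q q' : Q1, f (q * q') = f q * f q' := by
    intro q q'
    obtain ⟨t, ht, b, htb⟩ := hore (rf q) (sf q') (hsf q')
    have hd : t * sf q ∈ T := hmul t ht _ (hsf q)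
    have rep : σ1 (t * sf q) * (q * q') = σ1 (b * rf q') := by
      rw [map_mul, mul_assoc, ← mul_assoc (σ1 (sf q)), hrep q, ← mul_assoc,
        ← map_mul, htb, map_mul, mul_assoc, hrep q', ← map_mul]
    have h1' := spec (q * q') _ hd _ rep
    apply cancel2 _ hd
    rw [h1']
    have e1 : σ2 (b * rf q') = σ2 (b * sf q') * f q' := by
      rw [map_mul, map_mul, mul_assoc, spec0]
    have e2 : σ2 (t * rf q) = σ2 (t * sf q) * f q := by
      rw [map_mul, map_mul, mul_assoc, spec0]
    rw [e1, ← htb, e2, mul_assoc]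
  exact ⟨⟨⟨⟨f, hone⟩, hmulf⟩, hzero, hadd⟩, spec⟩

/-- If `S` is a left denominator set with nonempty core `S_c`, then the natural
map `θ : S_c⁻¹R → S⁻¹R`, `s⁻¹r ↦ s⁻¹r`, is a ring isomorphism. -/
theorem core_localization_iso {R : Type*} [Ring R] (S : Set R)
    (hS : LeftDenominatorSet S) (hc : (coreSet S).Nonempty)
    {Qc : Type*} [Ring Qc] (σc : R →+* Qc)
    (hlocc : IsLeftLocalization (coreSet S) σc)
    {Q : Type*} [Ring Q] (σ : R →+* Q) (hloc : IsLeftLocalization S σ) :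
    ∃ θ : Qc ≃+* Q, ∀ r : R, θ (σc r) = σ r := by
  obtain ⟨c₀, hc₀⟩ := hc
  obtain ⟨⟨h1S, h0S, hmulS, horeS⟩, hden⟩ := hS
  -- S * core ⊆ core
  have hScore : ∀ s ∈ S, ∀ c ∈ coreSet S, s * c ∈ coreSet S := by
    intro s hs c hcc
    refine ⟨hmulS s hs c hcc.1, ?_⟩
    ext r
    simp only [Set.mem_setOf_eq]
    constructor
    · intro h
      have hcr : c * r ∈ assSet S := ⟨s, hs, by rw [← mul_assoc]; exact h⟩
      obtain ⟨t, htS, ht0⟩ := hcr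
      exact ⟨t * c, hmulS t htS c hcc.1, by rw [mul_assoc]; exact ht0⟩
    · intro h
      have hcr : r ∈ {x : R | c * x = 0} := hcc.2.symm ▸ h
      rw [mul_assoc, hcr, mul_zero]
  have hTmul : ∀ s ∈ coreSet S, ∀ t ∈ coreSet S, s * t ∈ coreSet S :=
    fun s hs t ht => hScore s hs.1 t ht
  have hTore : ∀ r : R, ∀ s ∈ coreSet S, ∃ s' ∈ coreSet S, ∃ r' : R, s' * r = r' * s := by
    intro r s hsc
    obtain ⟨s', hs', r', he⟩ := horeS r s hsc.1
    obtain ⟨t, ht, a, hta⟩ := horeS c₀ s' hs'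
    refine ⟨t * c₀, hScore t ht c₀ hc₀, a * r', ?_⟩
    rw [hta, mul_assoc, he, ← mul_assoc]
  have hassEq : assSet (coreSet S) = assSet S := by
    ext r
    constructor
    · rintro ⟨s, hs, h⟩
      exact ⟨s, hs.1, h⟩
    · intro h
      exact ⟨c₀, hc₀, (show r ∈ {x : R | c₀ * x = 0} from hc₀.2.symm ▸ h)⟩
  have hloc' : IsLeftLocalization (coreSet S) σ := by
    obtain ⟨huS, hfrS, hkS⟩ := hloc
    refine ⟨fun s hs => huS s hs.1, ?_, ?_⟩
    · intro q
      obtain ⟨s, hs, r, he⟩ := hfrS q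
      obtain ⟨t, ht, a, hta⟩ := horeS c₀ s hs
      refine ⟨t * c₀, hScore t ht c₀ hc₀, a * r, ?_⟩
      rw [hta, map_mul, mul_assoc, he, ← map_mul]
    · intro r
      rw [hkS r, hassEq]
  obtain ⟨φ, hφ⟩ := loc_hom (coreSet S) ⟨c₀, hc₀⟩ hTmul hTore σc hlocc σ hloc'
  obtain ⟨ψ, hψ⟩ := loc_hom (coreSet S) ⟨c₀, hc₀⟩ hTmul hTore σ hloc' σc hlocc
  have hφσ : ∀ r : R, φ (σc r) = σ r := by
    intro r
    have h := hφ (σc r) c₀ hc₀ (c₀ * r) (by rw [map_mul])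
    exact (hloc.1 c₀ hc₀.1).mul_left_cancel (by rw [h, map_mul])
  have li : ∀ q : Qc, ψ (φ q) = q := by
    intro q
    obtain ⟨s, hs, r, he⟩ := hlocc.2.1 q
    have h1 := hφ q s hs r he
    have h2 := hψ (φ q) s hs r h1
    exact (hlocc.1 s hs).mul_left_cancel (by rw [h2, he])
  have ri : ∀ q : Q, φ (ψ q) = q := by
    intro q
    obtain ⟨s, hs, r, he⟩ := hloc'.2.1 q
    have h1 := hψ q s hs r he
    have h2 := hφ (ψ q) s hs r h1
    exact (hloc'.1 s hs).mul_left_cancel (by rw [h2, he])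
  exact ⟨⟨⟨φ, ψ, li, ri⟩, map_mul φ, map_add φ⟩, hφσ⟩
end

section
/- Let S be a left Ore set of a ring R. Then the core S_c equals max(S), the set of elements s ∈ S whose right kernel ker(s·) is a maximal element of the poset {ker(t·) | t ∈ S} ordered by inclusion. -/
/-- For a left Ore set `S`, the core `S_c` equals `max S`, the set of `s ∈ S`
whose right kernel is a maximal element of `{ker (t ·) | t ∈ S}` under `⊆`. -/
theorem core_eq_max {R : Type*} [Ring R] (S : Set R) (hS : LeftOreSet S) :
    coreSet S =
      {s ∈ S | ∀ t ∈ S, {r : R | s * r = 0} ⊆ {r : R | t * r = 0} →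
        {r : R | t * r = 0} = {r : R | s * r = 0}} := by
  obtain ⟨h1, h0, hmul, hore⟩ := hS
  ext s
  simp only [coreSet, Set.mem_setOf_eq]
  constructor
  · rintro ⟨hs, hker⟩
    refine ⟨hs, fun t ht hsub => ?_⟩
    apply Set.Subset.antisymm _ hsub
    intro r hr
    rw [hker]
    exact ⟨t, ht, hr⟩
  · rintro ⟨hs, hmax⟩
    refine ⟨hs, ?_⟩
    apply Set.Subset.antisymm
    · intro r hr
      exact ⟨s, hs, hr⟩
    · rintro r ⟨t, ht, htr⟩
      -- find u ∈ S with ker s ∪ ker t ⊆ ker u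
      obtain ⟨s', hs', r', heq⟩ := hore t s hs
      have hu : s' * t ∈ S := hmul s' hs' t ht
      have hsub : {r : R | s * r = 0} ⊆ {r : R | (s' * t) * r = 0} := by
        intro x hx
        simp only [Set.mem_setOf_eq] at hx ⊢
        rw [heq, mul_assoc, hx, mul_zero]
      have := hmax (s' * t) hu hsub
      have : r ∈ {r : R | (s' * t) * r = 0} := by
        simp only [Set.mem_setOf_eq, mul_assoc, htr, mul_zero]
      rw [hmax (s' * t) hu hsub] at this
      exact this
end

section
/- Let R be a ring with exactly n maximal left denominator sets S₁, …, Sₙ such that each localization Rᵢ = Sᵢ⁻¹R is a division ring and the intersection of the ideals assᵢ := ass(Sᵢ) is zero. Then every nonzero element r of R belongs to some Sᵢ (i.e., R is a left localizable ring). -/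
/-- If `maxDen_l R = {S₁, …, Sₙ}`, each localization `Rᵢ = Sᵢ⁻¹R` is a division
ring, `Sᵢ = σᵢ⁻¹(Rᵢ^*)`, and `⋂ᵢ ass Sᵢ = 0`, then every nonzero `r ∈ R` lies
in some `Sᵢ`, i.e. `R` is a left localizable ring. -/
theorem left_localizable_of_div_rings {R : Type*} [Ring R] {n : ℕ}
    (S : Fin n → Set R) (Q : Fin n → Type*) [∀ i, Ring (Q i)]
    (σ : ∀ i, R →+* Q i)
    (hmax : ∀ i, MaxLeftDenominatorSet (S i))
    (hall : ∀ T : Set R, MaxLeftDenominatorSet T → ∃ i, T = S i)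
    (hloc : ∀ i, IsLeftLocalization (S i) (σ i))
    (hpre : ∀ i, S i = (σ i) ⁻¹' {q : Q i | IsUnit q})
    (hdiv : ∀ i, Nontrivial (Q i) ∧ ∀ q : Q i, q ≠ 0 → IsUnit q)
    (hint : (⋂ i, assSet (S i)) = {0}) :
    ∀ r : R, r ≠ 0 → ∃ i, r ∈ S i := by
  intro r hr
  have h1 : r ∉ (⋂ i, assSet (S i)) := by rw [hint]; simpa using hr
  obtain ⟨i, hi⟩ : ∃ i, r ∉ assSet (S i) := by simpa [Set.mem_iInter] using h1
  refine ⟨i, ?_⟩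
  rw [hpre i]
  exact (hdiv i).2 _ (fun h => hi (((hloc i).2.2 r).mp h))
end

section
/- Let R be a ring, S a maximal left denominator set of R with S = σ⁻¹((S⁻¹R)^*) for the localization map σ, such that σ is injective (ass(S) = 0) and R is left localizable with maxDen_l(R) = {S} (n = 1 case). Then S = R \ {0} and S⁻¹R is a division ring; in particular R is a domain. -/
/-- The union of a nonempty chain of left denominator sets is a left
denominator set. -/
lemma leftDenominatorSet_sUnion {R : Type*} [Ring R] (c : Set (Set R))
    (hc : ∀ U ∈ c, LeftDenominatorSet U) (hchain : IsChain (· ⊆ ·) c)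
    (hne : c.Nonempty) : LeftDenominatorSet (⋃₀ c) := by
  obtain ⟨U₀, hU₀⟩ := hne
  refine ⟨⟨⟨U₀, hU₀, (hc U₀ hU₀).1.1⟩, ?_, ?_, ?_⟩, ?_⟩
  · rintro ⟨U, hU, h0⟩
    exact (hc U hU).1.2.1 h0
  · rintro s ⟨A, hA, hsA⟩ t ⟨B, hB, htB⟩
    rcases hchain.total hA hB with h | h
    · exact ⟨B, hB, (hc B hB).1.2.2.1 s (h hsA) t htB⟩
    · exact ⟨A, hA, (hc A hA).1.2.2.1 s hsA t (h htB)⟩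
  · rintro r s ⟨A, hA, hsA⟩
    obtain ⟨s', hs', r', h⟩ := (hc A hA).1.2.2.2 r s hsA
    exact ⟨s', ⟨A, hA, hs'⟩, r', h⟩
  · rintro r s ⟨A, hA, hsA⟩ h
    obtain ⟨t, ht, h'⟩ := (hc A hA).2 r s hsA h
    exact ⟨t, ⟨A, hA, ht⟩, h'⟩

/-- Every left denominator set is contained in a maximal one (Zorn). -/
lemma exists_maxLeftDenominatorSet {R : Type*} [Ring R] (T : Set R)
    (hT : LeftDenominatorSet T) : ∃ M, T ⊆ M ∧ MaxLeftDenominatorSet M := by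
  obtain ⟨M, hTM, hM⟩ := zorn_subset_nonempty {U : Set R | LeftDenominatorSet U}
    (fun c hcs hchain hne =>
      ⟨⋃₀ c, leftDenominatorSet_sUnion c (fun U hU => hcs hU) hchain hne,
        fun s hs => Set.subset_sUnion_of_mem hs⟩) T hT
  exact ⟨M, hTM, hM.1, fun V hV hMV =>
    Set.Subset.antisymm (hM.2 hV hMV) hMV⟩

/-- Suppose `R` is left localizable with a unique maximal left denominator set
`S`, `S = σ⁻¹((S⁻¹R)^*)`, and `ass S = 0`. Then `S = R \ {0}`, `S⁻¹R` is a
division ring, and `R` is a domain. -/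
theorem unique_maxDen_localizable {R : Type*} [Ring R] (S : Set R)
    (hS : MaxLeftDenominatorSet S) {Q : Type*} [Ring Q] (σ : R →+* Q)
    (hloc : IsLeftLocalization S σ)
    (hpre : S = σ ⁻¹' {q : Q | IsUnit q})
    (hass : assSet S = {0})
    (hll : ∀ r : R, r ≠ 0 → ∃ T : Set R, LeftDenominatorSet T ∧ r ∈ T)
    (huniq : ∀ T : Set R, MaxLeftDenominatorSet T → T = S) :
    S = {r : R | r ≠ 0} ∧ (Nontrivial Q ∧ ∀ q : Q, q ≠ 0 → IsUnit q) ∧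
      IsDomain R := by
  -- S = R \ {0}
  have hSeq : S = {r : R | r ≠ 0} := by
    ext r
    constructor
    · rintro hr rfl
      exact hS.1.1.2.1 hr
    · intro hr
      obtain ⟨T, hT, hrT⟩ := hll r hr
      obtain ⟨M, hTM, hM⟩ := exists_maxLeftDenominatorSet T hT
      rw [← huniq M hM]
      exact hTM (hrT)
  -- kernel of σ is trivial
  have hker : ∀ r : R, σ r = 0 ↔ r = 0 := by
    intro r
    rw [hloc.2.2 r, hass, Set.mem_singleton_iff]
  -- R is nontrivial
  have hR10 : (1 : R) ≠ 0 := by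
    intro h
    exact hS.1.1.2.1 (h ▸ hS.1.1.1)
  -- Q is nontrivial
  have hQnt : Nontrivial Q := by
    refine ⟨1, 0, fun h => hR10 ?_⟩
    have : σ 1 = 0 := by rw [map_one, h]
    exact (hker 1).1 this
  -- nonzero elements of Q are units
  have hunit : ∀ q : Q, q ≠ 0 → IsUnit q := by
    intro q hq
    obtain ⟨s, hs, r, h⟩ := hloc.2.1 q
    have hsu : IsUnit (σ s) := hloc.1 s hs
    have hr : r ≠ 0 := by
      rintro rfl
      rw [map_zero] at h
      obtain ⟨u, hu⟩ := hsu
      apply hq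
      calc q = (↑u⁻¹ * σ s) * q := by rw [← hu, u.inv_mul, one_mul]
        _ = ↑u⁻¹ * (σ s * q) := by rw [mul_assoc]
        _ = 0 := by rw [h, mul_zero]
    have hru : IsUnit (σ r) := hloc.1 r (hSeq ▸ hr)
    obtain ⟨u, hu⟩ := hsu
    have : q = ↑u⁻¹ * σ r := by
      rw [← h, ← hu, ← mul_assoc, u.inv_mul, one_mul]
    rw [this]
    exact (u⁻¹.isUnit).mul hru
  refine ⟨hSeq, ⟨hQnt, hunit⟩, ?_⟩
  -- R is a domain
  have hRnt : Nontrivial R := ⟨1, 0, hR10⟩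
  have : NoZeroDivisors R := by
    constructor
    intro a b hab
    by_contra h
    push_neg at h
    obtain ⟨ha, hb⟩ := h
    have hau := hunit (σ a) (fun h' => ha ((hker a).1 h'))
    have hbu := hunit (σ b) (fun h' => hb ((hker b).1 h'))
    haveI := hQnt
    have hab0 : σ a * σ b = 0 := by rw [← map_mul, hab, map_zero]
    exact (hau.mul hbu).ne_zero hab0
  exact NoZeroDivisors.to_isDomain R
end

section
/- Let R be a ring with maximal left denominator sets S₁, …, Sₙ (n ≥ 2) whose associated ideals 𝔞ᵢ = ass(Sᵢ) satisfy: the localization maps σᵢ : R → Rᵢ = Sᵢ⁻¹R have each Rᵢ a division ring, Sᵢ = σᵢ⁻¹(Rᵢ^*), and ⋂ᵢ 𝔞ᵢ = 0. Then for each i, Sᵢ ∩ ⋂_{j≠i} 𝔞ⱼ = (⋂_{j≠i} 𝔞ⱼ) \ {0}. -/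
/-- Let `S₁, …, Sₙ` (`n ≥ 2`) be maximal left denominator sets with each
`Rᵢ = Sᵢ⁻¹R` a division ring, `Sᵢ = σᵢ⁻¹(Rᵢ^*)` and `⋂ᵢ 𝔞ᵢ = 0` where
`𝔞ᵢ = ass Sᵢ`. Then `Sᵢ ∩ ⋂_{j ≠ i} 𝔞ⱼ = (⋂_{j ≠ i} 𝔞ⱼ) \ {0}` for each `i`. -/
theorem inter_ass_eq_sdiff_zero {R : Type*} [Ring R] {n : ℕ} (hn : 2 ≤ n)
    (S : Fin n → Set R) (Q : Fin n → Type*) [∀ i, Ring (Q i)]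
    (σ : ∀ i, R →+* Q i)
    (hmax : ∀ i, MaxLeftDenominatorSet (S i))
    (hloc : ∀ i, IsLeftLocalization (S i) (σ i))
    (hpre : ∀ i, S i = (σ i) ⁻¹' {q : Q i | IsUnit q})
    (hdiv : ∀ i, Nontrivial (Q i) ∧ ∀ q : Q i, q ≠ 0 → IsUnit q)
    (hint : (⋂ i, assSet (S i)) = {0}) :
    ∀ i, S i ∩ (⋂ j ∈ ({i}ᶜ : Set (Fin n)), assSet (S j)) =
      (⋂ j ∈ ({i}ᶜ : Set (Fin n)), assSet (S j)) \ {0} := by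
  intro i
  ext r
  simp only [Set.mem_inter_iff, Set.mem_diff, Set.mem_singleton_iff, Set.mem_iInter]
  constructor
  · rintro ⟨hS, hA⟩
    refine ⟨hA, ?_⟩
    rintro rfl
    -- 0 ∈ S i contradicts 0 ∉ S i
    exact (hmax i).1.1.2.1 hS
  · rintro ⟨hA, hr0⟩
    refine ⟨?_, hA⟩
    -- show σ i r ≠ 0
    have hker := (hloc i).2.2 r
    have hne : (σ i) r ≠ 0 := by
      intro h0
      have hi : r ∈ assSet (S i) := (hker).mp h0
      have : r ∈ ⋂ j, assSet (S j) := by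
        refine Set.mem_iInter.2 fun j => ?_
        by_cases hji : j = i
        · subst hji; exact hi
        · exact hA j hji
      rw [hint] at this
      exact hr0 this
    have : IsUnit ((σ i) r) := (hdiv i).2 _ hne
    rw [hpre i]
    exact this
end

section
/- Let R be a ring and T a regular left denominator set (T consists of non-zero-divisors, ass(T) = 0). Then T is contained in every maximal left denominator set S of R. -/
/-- A regular left denominator set `T` (i.e. `ass T = 0`) is contained in every
maximal left denominator set `S` of `R`. -/
theorem regular_den_subset_maxDen {R : Type*} [Ring R] (T S : Set R)
    (hT : LeftDenominatorSet T) (hT0 : assSet T = {0})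
    (hS : MaxLeftDenominatorSet S) : T ⊆ S := by
  obtain ⟨⟨hT1, hT02, hTmul, hTore⟩, hTrev⟩ := hT
  obtain ⟨⟨⟨hS1, hS0, hSmul, hSore⟩, hSrev⟩, hSmax⟩ := hS
  -- every element of T is left regular
  have tlreg : ∀ t ∈ T, ∀ r : R, t * r = 0 → r = 0 := by
    intro t ht r hr
    have : r ∈ assSet T := ⟨t, ht, hr⟩
    rw [hT0] at this; exact this
  -- every element of T is right regular
  have trreg : ∀ t ∈ T, ∀ r : R, r * t = 0 → r = 0 := by
    intro t ht r hr
    obtain ⟨t', ht', h⟩ := hTrev r t ht hr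
    have : r ∈ assSet T := ⟨t', ht', h⟩
    rw [hT0] at this; exact this
  set W : Submonoid R := Submonoid.closure (S ∪ T) with hW
  have hSW : S ⊆ (W : Set R) := fun s hs => Submonoid.subset_closure (Or.inl hs)
  have hTW : T ⊆ (W : Set R) := fun t ht => Submonoid.subset_closure (Or.inr ht)
  -- key regularity invariant : r * w ∈ ass S → r ∈ ass S for all w ∈ W
  have hP : ∀ w ∈ W, ∀ r : R, r * w ∈ assSet S → r ∈ assSet S := by
    intro w hw
    induction hw using Submonoid.closure_induction with
    | mem x hx =>
      rcases hx with hx | hx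
      · -- x ∈ S : use the denominator condition for S
        intro r hr
        obtain ⟨s2, hs2, h2⟩ := hr
        obtain ⟨s3, hs3, h3⟩ := hSrev (s2 * r) x hx (by rwa [← mul_assoc] at h2)
        exact ⟨s3 * s2, hSmul s3 hs3 s2 hs2, by rw [mul_assoc]; exact h3⟩
      · -- x ∈ T : use right regularity of x
        intro r hr
        obtain ⟨s2, hs2, h2⟩ := hr
        have : (s2 * r) * x = 0 := by rw [mul_assoc]; exact h2
        have := trreg x hx (s2 * r) this
        exact ⟨s2, hs2, this⟩
    | one => intro r hr; rwa [mul_one] at hr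
    | mul x y hx hy px py =>
      intro r hr
      have : (r * x) * y ∈ assSet S := by rw [mul_assoc]; exact hr
      exact px r (py (r * x) this)
  -- 0 ∉ W
  have h0W : (0 : R) ∉ (W : Set R) := by
    intro h0
    have h1 : (1 : R) ∈ assSet S := hP 0 h0 1 ⟨1, hS1, by simp⟩
    obtain ⟨s, hs, h⟩ := h1
    rw [mul_one] at h
    exact hS0 (h ▸ hs)
  -- Ore condition for W
  have hWore : ∀ w ∈ W, ∀ r : R, ∃ w' ∈ (W : Set R), ∃ r' : R, w' * r = r' * w := by
    intro w hw
    induction hw using Submonoid.closure_induction with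
    | mem x hx =>
      rcases hx with hx | hx
      · intro r
        obtain ⟨s', hs', r', h⟩ := hSore r x hx
        exact ⟨s', hSW hs', r', h⟩
      · intro r
        obtain ⟨t', ht', r', h⟩ := hTore r x hx
        exact ⟨t', hTW ht', r', h⟩
    | one => intro r; exact ⟨1, one_mem W, r, by rw [one_mul, mul_one]⟩
    | mul x y hx hy px py =>
      intro r
      obtain ⟨u, hu, r1, h1⟩ := py r
      obtain ⟨v, hv, r2, h2⟩ := px r1
      refine ⟨v * u, mul_mem hv hu, r2, ?_⟩
      rw [mul_assoc, h1, ← mul_assoc, h2, mul_assoc]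
  -- reversibility for W
  have hWrev : ∀ w ∈ W, ∀ r : R, r * w = 0 → ∃ u ∈ (W : Set R), u * r = 0 := by
    intro w hw
    induction hw using Submonoid.closure_induction with
    | mem x hx =>
      rcases hx with hx | hx
      · intro r hr
        obtain ⟨u, hu, h⟩ := hSrev r x hx hr
        exact ⟨u, hSW hu, h⟩
      · intro r hr
        exact ⟨1, one_mem W, by rw [trreg x hx r hr, mul_zero]⟩
    | one => intro r hr; rw [mul_one] at hr; exact ⟨1, one_mem W, by rw [hr, mul_zero]⟩
    | mul x y hx hy px py =>
      intro r hr
      obtain ⟨u2, hu2, h2⟩ := py (r * x) (by rwa [← mul_assoc] at hr)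
      obtain ⟨u1, hu1, h1⟩ := px (u2 * r) (by rwa [← mul_assoc] at h2)
      exact ⟨u1 * u2, mul_mem hu1 hu2, by rwa [mul_assoc]⟩
  -- W is a left denominator set
  have hWden : LeftDenominatorSet (W : Set R) := by
    refine ⟨⟨one_mem W, h0W, fun a ha b hb => mul_mem ha hb, fun r s hs => ?_⟩,
      fun r s hs h => hWrev s hs r h⟩
    obtain ⟨w', hw', r', h⟩ := hWore s hs r
    exact ⟨w', hw', r', h⟩
  have hWS : (W : Set R) = S := hSmax _ hWden hSW
  exact fun t ht => hWS ▸ hTW ht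
end
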